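/- (Key identity in the proof of the turning point theorem.) Let φ : ℝ → E be a C^∞ curve and T, Y_1, …, Y_p : ℝ → ℝ be C^∞ functions such that for every λ, φ(λ) satisfies the first law with temperature T(λ) and potentials Y_i(λ). Let ũ : ℝ → E be a map such that λ·DS_{φ(λ)}(ũ(λ)) = (S∘φ)′(λ) and λ·DX^i_{φ(λ)}(ũ(λ)) = (X^i∘φ)′(λ) for all i and all λ, and set û(λ) := φ′(λ) − λ·ũ(λ). Then for every λ, B_{φ(λ)}(û(λ), û(λ)) = −[T′(λ)·(S∘φ)′(λ) + Σ_{i=1}^p Y_i′(λ)·(X^i∘φ)′(λ)] + λ²·B_{φ(λ)}(ũ(λ), ũ(λ)). -/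

import Mathlib

open Filter Topology

/-- The second Fréchet derivative of `f : E → ℝ` at `φ`, applied to `u`, `v`. -/
noncomputable def D2 {E : Type*} [NormedAddCommGroup E] [NormedSpace ℝ E]
    (f : E → ℝ) (φ u v : E) : ℝ :=
  fderiv ℝ (fderiv ℝ f) φ u v

/-- `φ` satisfies the first law with temperature `T` and potentials `Y i`:
`DM_φ = T·DS_φ + ∑ i, Y i · DX^i_φ` as continuous linear functionals. -/
def FirstLaw {E : Type*} [NormedAddCommGroup E] [NormedSpace ℝ E] {p : ℕ}
    (M S : E → ℝ) (X : Fin p → E → ℝ) (φ : E) (T : ℝ) (Y : Fin p → ℝ) : Prop :=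
  fderiv ℝ M φ = T • fderiv ℝ S φ + ∑ i, Y i • fderiv ℝ (X i) φ

/-- The canonical bilinear form
`B_φ(u,v) = D²M_φ(u,v) − T·D²S_φ(u,v) − ∑ i, Y i·D²X^i_φ(u,v)`. -/
noncomputable def Bform {E : Type*} [NormedAddCommGroup E] [NormedSpace ℝ E] {p : ℕ}
    (M S : E → ℝ) (X : Fin p → E → ℝ) (φ : E) (T : ℝ) (Y : Fin p → ℝ) (u v : E) : ℝ :=
  D2 M φ u v - T * D2 S φ u v - ∑ i, Y i * D2 (X i) φ u v

/-!
Differentiating the first law along `φ` gives `B(φ', v) = T'·DS(v) + ∑ Yᵢ'·DXⁱ(v)` for every `v`.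
For `v = φ'` the right side is `T'·(S∘φ)' + ∑ Yᵢ'·(Xⁱ∘φ)'` by the chain rule, and for `v = λũ` it
is the same quantity by the defining property of `ũ`. Since `B` is symmetric (Schwarz),
`B(φ' - λũ, φ' - λũ) = B(φ', φ') - 2λ·B(φ', ũ) + λ²·B(ũ, ũ)`, which is the identity.
-/

section TurningPoint

variable {E : Type*} [NormedAddCommGroup E] [NormedSpace ℝ E] {p : ℕ}

noncomputable def bformCLM (M S : E → ℝ) (X : Fin p → E → ℝ) (φ : E) (T : ℝ) (Y : Fin p → ℝ) :
    E →L[ℝ] E →L[ℝ] ℝ :=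
  fderiv ℝ (fderiv ℝ M) φ - T • fderiv ℝ (fderiv ℝ S) φ - ∑ i, Y i • fderiv ℝ (fderiv ℝ (X i)) φ

theorem Bform_eq_bformCLM_apply (M S : E → ℝ) (X : Fin p → E → ℝ) (φ : E) (T : ℝ)
    (Y : Fin p → ℝ) (u v : E) :
    Bform M S X φ T Y u v = bformCLM M S X φ T Y u v := by
  simp [Bform, bformCLM, D2, sum_apply]

theorem bformCLM_apply_comm {M S : E → ℝ} {X : Fin p → E → ℝ} {φ : E}
    (hM : IsSymmSndFDerivAt ℝ M φ) (hS : IsSymmSndFDerivAt ℝ S φ)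
    (hX : ∀ i, IsSymmSndFDerivAt ℝ (X i) φ) (T : ℝ) (Y : Fin p → ℝ) (u v : E) :
    bformCLM M S X φ T Y u v = bformCLM M S X φ T Y v u := by
  simp [bformCLM, sum_apply, hM u v, hS u v, fun i => hX i u v]

theorem ContinuousLinearMap.apply_sub_smul_apply_sub_smul {L : E →L[ℝ] E →L[ℝ] ℝ}
    (hL : ∀ u v, L u v = L v u) (a b : E) (c : ℝ) :
    L (a - c • b) (a - c • b) = L a a - 2 * c * L a b + c ^ 2 * L b b := by
  simp only [map_sub, map_smul, sub_apply, smul_apply, smul_eq_mul, hL b a]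
  ring

theorem hasDerivAt_fderiv_comp {F : Type*} [NormedAddCommGroup F] [NormedSpace ℝ F]
    {f : E → F} {φ : ℝ → E} {l : ℝ} (hf : DifferentiableAt ℝ (fderiv ℝ f) (φ l))
    (hφ : DifferentiableAt ℝ φ l) :
    HasDerivAt (fun x => fderiv ℝ f (φ x)) (fderiv ℝ (fderiv ℝ f) (φ l) (deriv φ l)) l :=
  hf.hasFDerivAt.comp_hasDerivAt l hφ.hasDerivAt

/-- The first law differentiated along the curve `φ`. -/
theorem bformCLM_apply_deriv_eq_of_firstLaw {M S : E → ℝ} {X : Fin p → E → ℝ} {φ : ℝ → E} {T : ℝ → ℝ}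
    {Y : Fin p → ℝ → ℝ} (hfl : ∀ x, FirstLaw M S X (φ x) (T x) (fun i => Y i x)) {l : ℝ}
    (hM : DifferentiableAt ℝ (fderiv ℝ M) (φ l)) (hS : DifferentiableAt ℝ (fderiv ℝ S) (φ l))
    (hX : ∀ i, DifferentiableAt ℝ (fderiv ℝ (X i)) (φ l)) (hφ : DifferentiableAt ℝ φ l)
    (hT : DifferentiableAt ℝ T l) (hY : ∀ i, DifferentiableAt ℝ (Y i) l) :
    bformCLM M S X (φ l) (T l) (fun i => Y i l) (deriv φ l) =
      deriv T l • fderiv ℝ S (φ l) + ∑ i, deriv (Y i) l • fderiv ℝ (X i) (φ l) := by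
  have hlhs := hasDerivAt_fderiv_comp hM hφ
  have hDS := hasDerivAt_fderiv_comp hS hφ
  have hDX := fun i => hasDerivAt_fderiv_comp (hX i) hφ
  have hrhs := (hT.hasDerivAt.smul hDS).add
    (HasDerivAt.fun_sum (u := Finset.univ) fun i _ => (hY i).hasDerivAt.smul (hDX i))
  have hfl' : (fun x => fderiv ℝ M (φ x)) =
      fun x => T x • fderiv ℝ S (φ x) + ∑ i, Y i x • fderiv ℝ (X i) (φ x) := funext hfl
  rw [hfl'] at hlhs
  have hderiv := hlhs.unique hrhs
  simp only [bformCLM, sub_apply, smul_apply, sum_apply, hderiv, Finset.sum_add_distrib]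
  abel

end TurningPoint

theorem turning_point_key_identity_general
    {E : Type*} [NormedAddCommGroup E] [NormedSpace ℝ E]
    {p : ℕ} (M S : E → ℝ) (X : Fin p → E → ℝ)
    (hM : ContDiff ℝ (⊤ : ℕ∞) M) (hS : ContDiff ℝ (⊤ : ℕ∞) S)
    (hX : ∀ i, ContDiff ℝ (⊤ : ℕ∞) (X i))
    (φ : ℝ → E) (hφ : ContDiff ℝ (⊤ : ℕ∞) φ)
    (T : ℝ → ℝ) (Y : Fin p → ℝ → ℝ)
    (hT : ContDiff ℝ (⊤ : ℕ∞) T) (hY : ∀ i, ContDiff ℝ (⊤ : ℕ∞) (Y i))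
    (hfl : ∀ l : ℝ, FirstLaw M S X (φ l) (T l) (fun i => Y i l))
    (u' : ℝ → E)
    (hu'S : ∀ l : ℝ, l * fderiv ℝ S (φ l) (u' l) = deriv (S ∘ φ) l)
    (hu'X : ∀ (l : ℝ) (i : Fin p), l * fderiv ℝ (X i) (φ l) (u' l) = deriv (X i ∘ φ) l) :
    ∀ l : ℝ,
      Bform M S X (φ l) (T l) (fun i => Y i l)
        (deriv φ l - l • u' l) (deriv φ l - l • u' l) =
      -(deriv T l * deriv (S ∘ φ) l + ∑ i, deriv (Y i) l * deriv (X i ∘ φ) l)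
        + l ^ 2 * Bform M S X (φ l) (T l) (fun i => Y i l) (u' l) (u' l) := by
  intro l
  have two_le_top : (2 : WithTop ℕ∞) ≤ (⊤ : ℕ∞) := WithTop.coe_le_coe.2 le_top
  have hsymm {f : E → ℝ} (hf : ContDiff ℝ (⊤ : ℕ∞) f) : IsSymmSndFDerivAt ℝ f (φ l) :=
    hf.contDiffAt.isSymmSndFDerivAt (by simpa using two_le_top)
  have hdiff2 {f : E → ℝ} (hf : ContDiff ℝ (⊤ : ℕ∞) f) :
      DifferentiableAt ℝ (fderiv ℝ f) (φ l) :=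
    ((hf.of_le two_le_top).fderiv_right (m := 1) (by norm_num)).differentiable one_ne_zero _
  have hdφ : DifferentiableAt ℝ φ l := hφ.differentiable (by simp) l
  have hlaw := bformCLM_apply_deriv_eq_of_firstLaw hfl (hdiff2 hM) (hdiff2 hS) (fun i => hdiff2 (hX i)) hdφ
    (hT.differentiable (by simp) l) (fun i => (hY i).differentiable (by simp) l)
  have hchain {f : E → ℝ} (hf : ContDiff ℝ (⊤ : ℕ∞) f) :
      deriv (f ∘ φ) l = fderiv ℝ f (φ l) (deriv φ l) :=
    fderiv_comp_deriv l (hf.differentiable (by simp) _) hdφ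
  set L := bformCLM M S X (φ l) (T l) (fun i => Y i l)
  have h_aa : L (deriv φ l) (deriv φ l) =
      deriv T l * deriv (S ∘ φ) l + ∑ i, deriv (Y i) l * deriv (X i ∘ φ) l := by
    simp [L, hlaw, sum_apply, hchain hS, fun i => hchain (hX i)]
  have h_ab : l * L (deriv φ l) (u' l) =
      deriv T l * deriv (S ∘ φ) l + ∑ i, deriv (Y i) l * deriv (X i ∘ φ) l := by
    simp only [L, hlaw, ← hu'S, ← hu'X, add_apply, smul_apply, sum_apply, smul_eq_mul, mul_add,
      Finset.mul_sum]
    ring_nf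
  simp only [Bform_eq_bformCLM_apply]
  rw [ContinuousLinearMap.apply_sub_smul_apply_sub_smul
    (bformCLM_apply_comm (hsymm hM) (hsymm hS) (fun i => hsymm (hX i)) _ _), h_aa]
  linarith

/-- Key identity in the proof of the turning point theorem: with
`û(λ) = φ′(λ) − λ·ũ(λ)` where `λ·DS(ũ(λ)) = (S∘φ)′(λ)` and `λ·DXⁱ(ũ(λ)) = (Xⁱ∘φ)′(λ)`,
one has `B(û,û) = −[T′·(S∘φ)′ + ∑ᵢ Yᵢ′·(Xⁱ∘φ)′] + λ²·B(ũ,ũ)` at every `λ`. -/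
theorem turning_point_key_identity
    {E : Type*} [NormedAddCommGroup E] [NormedSpace ℝ E] [CompleteSpace E]
    {p : ℕ} (M S : E → ℝ) (X : Fin p → E → ℝ)
    (hM : ContDiff ℝ (⊤ : ℕ∞) M) (hS : ContDiff ℝ (⊤ : ℕ∞) S)
    (hX : ∀ i, ContDiff ℝ (⊤ : ℕ∞) (X i))
    (φ : ℝ → E) (hφ : ContDiff ℝ (⊤ : ℕ∞) φ)
    (T : ℝ → ℝ) (Y : Fin p → ℝ → ℝ)
    (hT : ContDiff ℝ (⊤ : ℕ∞) T) (hY : ∀ i, ContDiff ℝ (⊤ : ℕ∞) (Y i))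
    (hfl : ∀ l : ℝ, FirstLaw M S X (φ l) (T l) (fun i => Y i l))
    (u' : ℝ → E)
    (hu'S : ∀ l : ℝ, l * fderiv ℝ S (φ l) (u' l) = deriv (S ∘ φ) l)
    (hu'X : ∀ (l : ℝ) (i : Fin p), l * fderiv ℝ (X i) (φ l) (u' l) = deriv (X i ∘ φ) l) :
    ∀ l : ℝ,
      Bform M S X (φ l) (T l) (fun i => Y i l)
        (deriv φ l - l • u' l) (deriv φ l - l • u' l) =
      -(deriv T l * deriv (S ∘ φ) l + ∑ i, deriv (Y i) l * deriv (X i ∘ φ) l)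
        + l ^ 2 * Bform M S X (φ l) (T l) (fun i => Y i l) (u' l) (u' l) :=
  turning_point_key_identity_general M S X hM hS hX φ hφ T Y hT hY hfl u' hu'S hu'X
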